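/- For all real α > 1, t > 0, τ > 0, r₀ > 0 and R_s > 0, setting r₁ = r₀ + R_s: 2α·t^(−2/α)·( ∫_{r₀}^{r₁} t²·r^(1−2α)/(1 + t²·r^(−2α)) dr + ∫_{r₁}^∞ t²·τ²·r^(1−2α)/(1 + t²·τ²·r^(−2α)) dr ) = B̃(1/α, t²·r₁^(−2α), t²·r₀^(−2α)) + τ^(2/α)·B̃(1/α, 0, t²·τ²·r₁^(−2α)). -/

import Mathlib

open MeasureTheory Set

/-- The lower incomplete Beta function `β(z; x, y) = ∫₀^z u^(x-1) (1-u)^(y-1) du`,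
as an improper Lebesgue integral. -/
noncomputable def betaInc (z x y : ℝ) : ℝ :=
  ∫ u in Ioo (0 : ℝ) z, u ^ (x - 1) * (1 - u) ^ (y - 1)

/-- `B̃(z, a, b) = β(1/(1+a); z, 1-z) - β(1/(1+b); z, 1-z)`. -/
noncomputable def Btilde (z a b : ℝ) : ℝ :=
  betaInc (1 / (1 + a)) z (1 - z) - betaInc (1 / (1 + b)) z (1 - z)

open Real

section
variable {α c : ℝ}

/-- substitution map -/
noncomputable def subF (α c x : ℝ) : ℝ := 1 / (1 + c * x ^ (-(2*α)))

lemma subF_mem (hα : 0 < α) (hc : 0 < c) {x : ℝ} (hx : 0 < x) :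
    subF α c x ∈ Ioo (0:ℝ) 1 := by
  have hp : 0 < c * x ^ (-(2*α)) := mul_pos hc (rpow_pos_of_pos hx _)
  constructor
  · exact div_pos one_pos (by linarith)
  · rw [subF, div_lt_one (by linarith)]; linarith

lemma subF_strictMono (hα : 0 < α) (hc : 0 < c) :
    StrictMonoOn (subF α c) (Ioi (0:ℝ)) := by
  intro x hx y hy hxy
  have h1 : y ^ (-(2*α)) < x ^ (-(2*α)) :=
    rpow_lt_rpow_of_neg hx hxy (by linarith)
  have hp : 0 < c * y ^ (-(2*α)) := mul_pos hc (rpow_pos_of_pos hy _)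
  rw [subF, subF]
  apply one_div_lt_one_div_of_lt (by linarith)
  have := mul_lt_mul_of_pos_left h1 hc
  linarith

lemma subF_hasDerivAt (hα : 0 < α) (hc : 0 < c) {x : ℝ} (hx : 0 < x) :
    HasDerivAt (subF α c)
      (2*α*c*x ^ (-(2*α)-1) / (1 + c * x ^ (-(2*α)))^2) x := by
  have hp : 0 < 1 + c * x ^ (-(2*α)) := by
    have := mul_pos hc (rpow_pos_of_pos hx (-(2*α))); linarith
  have h1 : HasDerivAt (fun x : ℝ => 1 + c * x ^ (-(2*α)))
      (c * (-(2*α) * x ^ (-(2*α)-1))) x := by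
    have := (Real.hasDerivAt_rpow_const (p := -(2*α)) (Or.inl hx.ne'))
    exact (this.const_mul c).const_add 1
  have := h1.inv hp.ne'
  have heq : -(c * (-(2*α) * x ^ (-(2*α)-1))) / (1 + c * x ^ (-(2*α)))^2
      = 2*α*c*x ^ (-(2*α)-1) / (1 + c * x ^ (-(2*α)))^2 := by ring
  rw [heq] at this
  have hf : subF α c = (fun x : ℝ => 1 + c * x ^ (-(2*α)))⁻¹ := by
    funext y
    rw [subF, one_div]
    rfl
  rw [hf]
  exact this

lemma subF_inv (hα : 0 < α) (hc : 0 < c) {u : ℝ} (hu : u ∈ Ioo (0:ℝ) 1) :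
    0 < (c*u/(1-u)) ^ (1/(2*α)) ∧ subF α c ((c*u/(1-u)) ^ (1/(2*α))) = u := by
  obtain ⟨hu0, hu1⟩ := hu
  have hs : 0 < c*u/(1-u) := by
    apply div_pos (mul_pos hc hu0); linarith
  refine ⟨rpow_pos_of_pos hs _, ?_⟩
  have h1 : ((c*u/(1-u)) ^ (1/(2*α))) ^ (-(2*α)) = (1-u)/(c*u) := by
    rw [← Real.rpow_mul hs.le]
    have : 1/(2*α) * (-(2*α)) = -1 := by field_simp
    rw [this, Real.rpow_neg_one, inv_div]
  rw [subF, h1]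
  have h2 : 1 + c * ((1 - u) / (c * u)) = 1/u := by
    field_simp
    ring
  rw [h2, one_div_one_div]
end

section
variable {α c : ℝ}

lemma subF_image_Ioo (hα : 0 < α) (hc : 0 < c) {a b : ℝ} (ha : 0 < a) (hab : a < b) :
    subF α c '' Ioo a b = Ioo (subF α c a) (subF α c b) := by
  have hb : 0 < b := ha.trans hab
  ext v
  constructor
  · rintro ⟨x, ⟨hx1, hx2⟩, rfl⟩
    exact ⟨subF_strictMono hα hc ha (ha.trans hx1) hx1,
      subF_strictMono hα hc (ha.trans hx1) hb hx2⟩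
  · rintro ⟨hv1, hv2⟩
    have hv : v ∈ Ioo (0:ℝ) 1 :=
      ⟨(subF_mem hα hc ha).1.trans hv1, hv2.trans (subF_mem hα hc hb).2⟩
    obtain ⟨hx0, hfx⟩ := subF_inv hα hc hv
    refine ⟨_, ⟨?_, ?_⟩, hfx⟩
    · exact ((subF_strictMono hα hc).lt_iff_lt ha hx0).mp (by rw [hfx]; exact hv1)
    · exact ((subF_strictMono hα hc).lt_iff_lt hx0 hb).mp (by rw [hfx]; exact hv2)

lemma subF_image_Ioi (hα : 0 < α) (hc : 0 < c) {a : ℝ} (ha : 0 < a) :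
    subF α c '' Ioi a = Ioo (subF α c a) 1 := by
  ext v
  constructor
  · rintro ⟨x, hx, rfl⟩
    exact ⟨subF_strictMono hα hc ha (ha.trans hx) hx, (subF_mem hα hc (ha.trans hx)).2⟩
  · rintro ⟨hv1, hv2⟩
    have hv : v ∈ Ioo (0:ℝ) 1 := ⟨(subF_mem hα hc ha).1.trans hv1, hv2⟩
    obtain ⟨hx0, hfx⟩ := subF_inv hα hc hv
    exact ⟨_, ((subF_strictMono hα hc).lt_iff_lt ha hx0).mp (by rw [hfx]; exact hv1), hfx⟩

/-- the key pointwise identity -/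
lemma subF_pointwise (hα : 1 < α) (hc : 0 < c) {x : ℝ} (hx : 0 < x) :
    c * x ^ (1-2*α) / (1 + c * x ^ (-(2*α)))
      = c ^ (1/α) / (2*α) *
        (|2*α*c*x ^ (-(2*α)-1) / (1 + c * x ^ (-(2*α)))^2| •
          ((subF α c x) ^ (1/α - 1) * (1 - subF α c x) ^ ((1 - 1/α) - 1))) := by
  have hα0 : 0 < α := by linarith
  set y := x ^ (-(2*α)) with hy
  have hy0 : 0 < y := rpow_pos_of_pos hx _
  have hw : 0 < 1 + c * y := by nlinarith
  have hfx : subF α c x = 1/(1 + c*y) := rfl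
  have h1mf : 1 - subF α c x = c*y/(1+c*y) := by rw [hfx]; field_simp; ring
  -- x powers
  have hx1 : x ^ (1-2*α) = x * y := by
    rw [show (1-2*α) = 1 + (-(2*α)) by ring, Real.rpow_add hx, Real.rpow_one]
  have hx2 : x ^ (-(2*α)-1) = y * x⁻¹ := by
    rw [show (-(2*α)-1) = -(2*α) + (-1) by ring, Real.rpow_add hx, Real.rpow_neg_one]
  have hy3 : y ^ (-(1/α)) = x^2 := by
    rw [hy, ← Real.rpow_mul hx.le, show -(2*α) * (-(1/α)) = 2 by field_simp,
      Real.rpow_two, sq]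
  -- g (f x)
  have hg1 : (subF α c x) ^ (1/α - 1) = (1+c*y) ^ (1 - 1/α) := by
    rw [hfx, one_div, ← Real.rpow_neg_one (1+c*y), ← Real.rpow_mul hw.le]
    ring_nf
  have hg2 : (1 - subF α c x) ^ ((1 - 1/α) - 1) = (c*y) ^ (-(1/α)) * (1+c*y) ^ (1/α) := by
    rw [h1mf, Real.div_rpow (by positivity) hw.le,
      show (1 - 1/α) - 1 = -(1/α) by ring, Real.rpow_neg hw.le, div_eq_mul_inv, inv_inv]
  have hg3 : (c*y) ^ (-(1/α)) = c ^ (-(1/α)) * x^2 := by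
    rw [Real.mul_rpow hc.le hy0.le, hy3]
  have habs : |2*α*c*x ^ (-(2*α)-1) / (1 + c * x ^ (-(2*α)))^2|
      = 2*α*c*(y*x⁻¹) / (1 + c * y)^2 := by
    rw [abs_of_pos]
    · rw [hx2]
    · rw [hx2]; positivity
  rw [habs, hg1, hg2, hg3, hx1, smul_eq_mul]
  set P := (1+c*y) ^ (1 - 1/α) with hP
  set Q := (1+c*y) ^ (1/α) with hQ
  set U := c ^ (1/α) with hU
  set V := c ^ (-(1/α)) with hV
  have hpow : P * Q = 1 + c*y := by
    rw [hP, hQ, ← Real.rpow_add hw]; ring_nf; exact Real.rpow_one _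
  have hcc : U * V = 1 := by
    rw [hU, hV, ← Real.rpow_add hc]; ring_nf; exact Real.rpow_zero _
  have hxx : x⁻¹ * x^2 = x := by field_simp
  have h2α : (2*α) ≠ 0 := by positivity
  field_simp
  linear_combination (-(U*V)) * hpow + (-(1+c*y)) * hcc
end

lemma betaIntegrand_integrableOn {z : ℝ} (hz0 : 0 < z) (hz1 : z < 1) :
    IntegrableOn (fun u : ℝ => u ^ (z - 1) * (1 - u) ^ ((1 - z) - 1)) (Ioo (0:ℝ) 1) := by
  have h2 : (0:ℝ) < 2⁻¹ := by norm_num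
  have hsub : Ioo (0:ℝ) 1 ⊆ Icc (0:ℝ) 2⁻¹ ∪ Icc 2⁻¹ 1 := by
    intro u hu
    rcases le_or_gt u 2⁻¹ with h | h
    · exact Or.inl ⟨hu.1.le, h⟩
    · exact Or.inr ⟨h.le, hu.2.le⟩
  apply IntegrableOn.mono_set _ hsub
  apply IntegrableOn.union
  · -- near 0 : u ^ (z-1) integrable, (1-u)^(-z) continuous
    apply IntegrableOn.mul_continuousOn (K := Icc (0:ℝ) 2⁻¹)
    · rw [integrableOn_Icc_iff_integrableOn_Ioc]
      exact (intervalIntegral.intervalIntegrable_rpow' (by linarith)).1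
    · apply ContinuousOn.rpow_const
      · exact (continuousOn_const.sub continuousOn_id)
      · rintro u ⟨-, hu2⟩
        left; intro h
        have : u = 1 := by linarith [sub_eq_zero.mp h]
        norm_num at hu2; linarith
    · exact isCompact_Icc
  · -- near 1 : (1-u)^(-z) integrable, u^(z-1) continuous
    apply IntegrableOn.continuousOn_mul (K := Icc (2⁻¹:ℝ) 1)
    · apply ContinuousOn.rpow_const continuousOn_id
      rintro u ⟨hu1, -⟩
      left; positivity
    · rw [integrableOn_Icc_iff_integrableOn_Ioc]
      have h0 : IntervalIntegrable (fun u : ℝ => u ^ ((1 - z) - 1)) volume 2⁻¹ 0 :=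
        (intervalIntegral.intervalIntegrable_rpow' (by linarith)).symm
      have h1 := h0.comp_sub_left 1
      rw [show (1:ℝ) - 2⁻¹ = 2⁻¹ by norm_num, sub_zero] at h1
      rw [intervalIntegrable_iff_integrableOn_Ioc_of_le (by norm_num)] at h1
      exact h1
    · exact isCompact_Icc

lemma betaInc_sub {z : ℝ} (hz0 : 0 < z) (hz1 : z < 1) {p q : ℝ}
    (hp : 0 ≤ p) (hpq : p ≤ q) (hq : q ≤ 1) :
    betaInc q z (1 - z) - betaInc p z (1 - z)
      = ∫ u in Ioo p q, u ^ (z - 1) * (1 - u) ^ ((1 - z) - 1) := by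
  have hInt : IntegrableOn (fun u : ℝ => u ^ (z - 1) * (1 - u) ^ ((1 - z) - 1))
      (Ioc (0:ℝ) 1) :=
    ((betaIntegrand_integrableOn hz0 hz1).congr_set_ae Ioo_ae_eq_Ioc.symm)
  have key : ∀ r : ℝ, 0 ≤ r → r ≤ 1 →
      betaInc r z (1 - z) = ∫ u in (0:ℝ)..r, u ^ (z - 1) * (1 - u) ^ ((1 - z) - 1) := by
    intro r h0 h1
    rw [betaInc, intervalIntegral.integral_of_le h0, ← integral_Ioc_eq_integral_Ioo]
  rw [key p hp (hpq.trans hq), key q (hp.trans hpq) hq]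
  have hip : IntervalIntegrable (fun u : ℝ => u ^ (z - 1) * (1 - u) ^ ((1 - z) - 1))
      volume 0 p := by
    rw [intervalIntegrable_iff_integrableOn_Ioc_of_le hp]
    exact hInt.mono_set (Ioc_subset_Ioc le_rfl (hpq.trans hq))
  have hiq : IntervalIntegrable (fun u : ℝ => u ^ (z - 1) * (1 - u) ^ ((1 - z) - 1))
      volume 0 q := by
    rw [intervalIntegrable_iff_integrableOn_Ioc_of_le (hp.trans hpq)]
    exact hInt.mono_set (Ioc_subset_Ioc le_rfl hq)
  rw [intervalIntegral.integral_interval_sub_left hiq hip,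
    intervalIntegral.integral_of_le hpq, ← integral_Ioc_eq_integral_Ioo]

lemma key_Ioo {α c : ℝ} (hα : 1 < α) (hc : 0 < c) {a b : ℝ} (ha : 0 < a) (hab : a < b) :
    ∫ r in Ioo a b, c * r ^ (1 - 2*α) / (1 + c * r ^ (-(2*α)))
      = c ^ (1/α) / (2*α) *
        (betaInc (subF α c b) (1/α) (1 - 1/α) - betaInc (subF α c a) (1/α) (1 - 1/α)) := by
  have hα0 : 0 < α := by linarith
  have hz0 : 0 < 1/α := by positivity
  have hz1 : 1/α < 1 := by rw [div_lt_one hα0]; linarith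
  have hmemA := subF_mem hα0 hc ha
  have hmemB := subF_mem hα0 hc (ha.trans hab)
  have hderiv : ∀ x ∈ Ioo a b, HasDerivWithinAt (subF α c)
      (2*α*c*x ^ (-(2*α)-1) / (1 + c * x ^ (-(2*α)))^2) (Ioo a b) x :=
    fun x hx => (subF_hasDerivAt hα0 hc (ha.trans hx.1)).hasDerivWithinAt
  have hinj : InjOn (subF α c) (Ioo a b) :=
    ((subF_strictMono hα0 hc).injOn).mono (fun x hx => ha.trans hx.1)
  have himg := integral_image_eq_integral_abs_deriv_smul measurableSet_Ioo hderiv hinj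
    (fun u => u ^ (1/α - 1) * (1 - u) ^ ((1 - 1/α) - 1))
  rw [subF_image_Ioo hα0 hc ha hab] at himg
  rw [betaInc_sub hz0 hz1 hmemA.1.le
      ((subF_strictMono hα0 hc).le_iff_le ha (ha.trans hab) |>.mpr hab.le) hmemB.2.le,
    himg, ← MeasureTheory.integral_const_mul]
  exact setIntegral_congr_fun measurableSet_Ioo
    (fun x hx => subF_pointwise hα hc (ha.trans hx.1))

lemma key_Ioi {α c : ℝ} (hα : 1 < α) (hc : 0 < c) {a : ℝ} (ha : 0 < a) :
    ∫ r in Ioi a, c * r ^ (1 - 2*α) / (1 + c * r ^ (-(2*α)))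
      = c ^ (1/α) / (2*α) *
        (betaInc 1 (1/α) (1 - 1/α) - betaInc (subF α c a) (1/α) (1 - 1/α)) := by
  have hα0 : 0 < α := by linarith
  have hz0 : 0 < 1/α := by positivity
  have hz1 : 1/α < 1 := by rw [div_lt_one hα0]; linarith
  have hmemA := subF_mem hα0 hc ha
  have hderiv : ∀ x ∈ Ioi a, HasDerivWithinAt (subF α c)
      (2*α*c*x ^ (-(2*α)-1) / (1 + c * x ^ (-(2*α)))^2) (Ioi a) x :=
    fun x hx => (subF_hasDerivAt hα0 hc (ha.trans hx)).hasDerivWithinAt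
  have hinj : InjOn (subF α c) (Ioi a) :=
    ((subF_strictMono hα0 hc).injOn).mono (fun x hx => ha.trans hx)
  have himg := integral_image_eq_integral_abs_deriv_smul measurableSet_Ioi hderiv hinj
    (fun u => u ^ (1/α - 1) * (1 - u) ^ ((1 - 1/α) - 1))
  rw [subF_image_Ioi hα0 hc ha] at himg
  rw [betaInc_sub hz0 hz1 hmemA.1.le hmemA.2.le le_rfl, himg, ← MeasureTheory.integral_const_mul]
  exact setIntegral_congr_fun measurableSet_Ioi
    (fun x hx => subF_pointwise hα hc (ha.trans hx))

lemma alg_final {α U V W S D₁ D₂ : ℝ} (hα : α ≠ 0) (hA : U*V = 1) (hB : U*W = S) :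
    2*α*U*(V/(2*α)*D₁ + W/(2*α)*D₂) = D₁ + S*D₂ := by
  field_simp
  linear_combination D₁*hA + D₂*hB

/-- Identity for `M(t, r₀)` in the proof of Theorem 1: for `α > 1`, `t > 0`, `τ > 0`,
`r₀ > 0`, `R_s > 0` and `r₁ = r₀ + R_s`,
`2 α t^(-2/α) ( ∫_{r₀}^{r₁} t² r^(1-2α)/(1+t² r^(-2α)) dr
    + ∫_{r₁}^∞ t² τ² r^(1-2α)/(1+t² τ² r^(-2α)) dr )
  = B̃(1/α, t² r₁^(-2α), t² r₀^(-2α)) + τ^(2/α) B̃(1/α, 0, t² τ² r₁^(-2α))`. -/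
theorem M_identity_thm1
    (α t τ r₀ Rs : ℝ) (hα : 1 < α) (ht : 0 < t) (hτ : 0 < τ) (hr₀ : 0 < r₀) (hRs : 0 < Rs)
    (r₁ : ℝ) (hr₁ : r₁ = r₀ + Rs) :
    2 * α * t ^ (-2 / α) *
        ((∫ r in Ioo r₀ r₁, t ^ 2 * r ^ (1 - 2 * α) / (1 + t ^ 2 * r ^ (-(2 * α))))
          + ∫ r in Ioi r₁,
              t ^ 2 * τ ^ 2 * r ^ (1 - 2 * α) / (1 + t ^ 2 * τ ^ 2 * r ^ (-(2 * α))))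
      = Btilde (1 / α) (t ^ 2 * r₁ ^ (-(2 * α))) (t ^ 2 * r₀ ^ (-(2 * α)))
        + τ ^ (2 / α) * Btilde (1 / α) 0 (t ^ 2 * τ ^ 2 * r₁ ^ (-(2 * α))) := by
  have hr₁0 : 0 < r₁ := by rw [hr₁]; linarith
  have hr01 : r₀ < r₁ := by rw [hr₁]; linarith
  have hc1 : (0:ℝ) < t ^ 2 := by positivity
  have hc2 : (0:ℝ) < t ^ 2 * τ ^ 2 := by positivity
  rw [key_Ioo hα hc1 hr₀ hr01, key_Ioi hα hc2 hr₁0]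
  simp only [Btilde, subF]
  rw [show (1:ℝ)/(1+0) = 1 by norm_num]
  have hA : t ^ (-2 / α) * (t ^ 2 : ℝ) ^ (1/α) = 1 := by
    rw [← Real.rpow_natCast t 2, ← Real.rpow_mul ht.le, ← Real.rpow_add ht]
    rw [show -2 / α + (2:ℕ) * (1/α) = 0 by push_cast; ring, Real.rpow_zero]
  have hτ2 : (τ ^ 2 : ℝ) ^ (1/α) = τ ^ (2/α) := by
    rw [← Real.rpow_natCast τ 2, ← Real.rpow_mul hτ.le,
      show ((2:ℕ):ℝ)*(1/α) = 2/α by push_cast; ring]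
  have hB : t ^ (-2 / α) * (t ^ 2 * τ ^ 2 : ℝ) ^ (1/α) = τ ^ (2/α) := by
    rw [Real.mul_rpow hc1.le (by positivity), ← mul_assoc, hA, one_mul, hτ2]
  exact alg_final (by positivity) hA hB
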